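/- arXiv:2208.12998 — 2 statements merged into one kernel-verified Lean document; each statement's English description precedes it below -/
import Mathlib

section
/- Fix a nonzero real number λ and an integer r ≥ 0. Let f(x) = Σ_{n=0}^{d} a_n x^n be a real polynomial and let g(x) = Σ_{n=0}^{∞} b_n x^n ∈ ℝ[[x]] be a formal power series. Define f_λ(y) = Σ_{n=0}^{d} a_n (y)_{n,λ}. Then the following identity holds in ℝ[[x]]: Σ_{n=0}^{d} a_n Σ_{k=0}^{n} {n+r brace k+r}_{r,λ} x^k g^{(k)}(x) = Σ_{n=0}^{∞} b_n f_λ(n+r) x^n, where g^{(k)} is the k-th formal derivative of g. -/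
open Finset PowerSeries

noncomputable section

/-- The degenerate falling factorial `(x)_{n,λ} = x(x-λ)⋯(x-(n-1)λ)`. -/
def dff (lam x : ℝ) (n : ℕ) : ℝ := ∏ i ∈ Finset.range n, (x - i * lam)

/-- The ordinary falling factorial `(x)_n = x(x-1)⋯(x-n+1)`. -/
def ff (x : ℝ) (n : ℕ) : ℝ := ∏ i ∈ Finset.range n, (x - i)

/-!
On `xⁿ` the operator `x^k D^k` acts by multiplication with the falling factorial `(n)_k`.
Hence `∑_k {n+r brace k+r}_{r,λ} x^k D^k` multiplies the `j`-th coefficient of `g` by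
`∑_k {n+r brace k+r}_{r,λ} (j)_k = (j+r)_{n,λ}`, and summing against the `a_n` yields `f_λ(j+r)`.
-/

lemma ff_natCast (m k : ℕ) : ff m k = m.descFactorial k := by
  rw [ff, ← descPochhammer_eval_eq_prod_range, descPochhammer_eval_eq_descFactorial]

lemma PowerSeries.coeff_X_pow_mul_iterate_derivative {R : Type*} [CommSemiring R]
    (f : R⟦X⟧) (k m : ℕ) :
    coeff m (X ^ k * (derivative R)^[k] f) = m.descFactorial k * coeff m f := by
  rcases le_or_gt k m with hkm | hmk
  · obtain ⟨j, rfl⟩ := Nat.exists_eq_add_of_le' hkm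
    rw [coeff_X_pow_mul, coeff_iterate_derivative, Nat.add_descFactorial_eq_ascFactorial]
  · rw [coeff_X_pow_mul', if_neg hmk.not_ge, Nat.descFactorial_of_lt hmk, Nat.cast_zero, zero_mul]

lemma PowerSeries.coeff_sum_smul_X_pow_mul_iterate_derivative (s : Finset ℕ) (c : ℕ → ℝ)
    (g : ℝ⟦X⟧) (j : ℕ) :
    coeff j (∑ k ∈ s, c k • (X ^ k * (derivative ℝ)^[k] g)) =
      (∑ k ∈ s, c k * ff j k) * coeff j g := by
  simp only [map_sum, coeff_smul, coeff_X_pow_mul_iterate_derivative, ff_natCast, smul_eq_mul,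
    Finset.sum_mul, mul_assoc]

theorem statement_2_general (lam : ℝ) (r : ℕ)
    (S : ℕ → ℕ → ℝ)
    (hS : ∀ (n : ℕ) (x : ℝ), dff lam (x + r) n = ∑ k ∈ Finset.range (n + 1), S n k * ff x k)
    (d : ℕ) (a : ℕ → ℝ) (g : PowerSeries ℝ) :
    ∑ n ∈ Finset.range (d + 1), a n •
        ∑ k ∈ Finset.range (n + 1),
          S n k • (PowerSeries.X ^ k * (derivativeFun (R := ℝ))^[k] g) =
      PowerSeries.mk fun n =>
        (PowerSeries.coeff n g) *
          ∑ m ∈ Finset.range (d + 1), a m * dff lam ((n : ℝ) + r) m := by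
  ext j
  change coeff j (∑ n ∈ range (d + 1), a n •
    ∑ k ∈ range (n + 1), S n k • (X ^ k * (derivative ℝ)^[k] g)) = _
  rw [coeff_mk, map_sum, Finset.mul_sum]
  refine Finset.sum_congr rfl fun n _ => ?_
  rw [coeff_smul, coeff_sum_smul_X_pow_mul_iterate_derivative, ← hS, smul_eq_mul]
  ring

/-- for a polynomial `f(x) = ∑_{n=0}^d a_n x^n` and a power series `g`,
`∑_{n=0}^d a_n ∑_{k=0}^n {n+r brace k+r}_{r,λ} x^k g^{(k)}(x) = ∑_{n=0}^∞ b_n f_λ(n+r) x^n`,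
where `b_n` is the `n`-th coefficient of `g`, `f_λ(y) = ∑_{n=0}^d a_n (y)_{n,λ}`, and
`S n k` denotes the degenerate `r`-Stirling number of the second kind `{n+r brace k+r}_{r,λ}`,
characterized by `(x+r)_{n,λ} = ∑_{k=0}^n S n k (x)_k`. -/
theorem statement_2 (lam : ℝ) (hlam : lam ≠ 0) (r : ℕ)
    (S : ℕ → ℕ → ℝ)
    (hS : ∀ (n : ℕ) (x : ℝ), dff lam (x + r) n = ∑ k ∈ Finset.range (n + 1), S n k * ff x k)
    (d : ℕ) (a : ℕ → ℝ) (g : PowerSeries ℝ) :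
    ∑ n ∈ Finset.range (d + 1), a n •
        ∑ k ∈ Finset.range (n + 1),
          S n k • (PowerSeries.X ^ k * (derivativeFun (R := ℝ))^[k] g) =
      PowerSeries.mk fun n =>
        (PowerSeries.coeff n g) *
          ∑ m ∈ Finset.range (d + 1), a m * dff lam ((n : ℝ) + r) m :=
  statement_2_general lam r S hS d a g
end
end

section
/- Fix a nonzero real number λ and integers m ≥ 0, r ≥ 0. The real series Σ_{n=0}^{∞} (n+r)_{m,λ} (1/2)^{n+1} converges absolutely and its sum equals the degenerate r-Fubini number F^{(r)}_{m,λ} = F^{(r)}_{m,λ}(1) = Σ_{k=0}^{m} {m+r brace k+r}_{r,λ} k!. -/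
/-!
Expanding `(n + r)_{m,λ}` in the falling-factorial basis reduces the series to a finite
combination of `∑ₙ (n)_k / 2ⁿ⁺¹`. At a natural number the falling factorial `(n)_k` is
`k! · C(n, k)`, and the negative binomial series `∑ₙ C(n, k) qⁿ = qᵏ / (1 - q)ᵏ⁺¹` at `q = 1/2`
gives `∑ₙ (n)_k / 2ⁿ⁺¹ = k!`. Absolute convergence is automatic, since summability on `ℝ`
is absolute.
-/

open Finset

noncomputable section

lemma ff_natCast_s7 (n k : ℕ) : ff n k = n.descFactorial k := by
  rw [ff, ← descPochhammer_eval_eq_prod_range, descPochhammer_eval_eq_descFactorial]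

lemma hasSum_descFactorial_mul_geometric {𝕜 : Type*} [NormedField 𝕜] [CompleteSpace 𝕜]
    (k : ℕ) {r : 𝕜} (hr : ‖r‖ < 1) :
    HasSum (fun n ↦ (n.descFactorial k : 𝕜) * r ^ n)
      (k.factorial * r ^ k / (1 - r) ^ (k + 1)) := by
  have hshift : HasSum (fun n ↦ ((n + k).descFactorial k : 𝕜) * r ^ (n + k))
      (k.factorial * r ^ k / (1 - r) ^ (k + 1)) := by
    rw [mul_div_assoc, div_eq_mul_one_div (r ^ k), ← mul_assoc]
    refine ((hasSum_choose_mul_geometric_of_norm_lt_one k hr).mul_left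
      ((k.factorial : 𝕜) * r ^ k)).congr_fun fun n ↦ ?_
    rw [Nat.descFactorial_eq_factorial_mul_choose, pow_add]
    push_cast
    ring
  have hinit : ∑ n ∈ range k, (n.descFactorial k : 𝕜) * r ^ n = 0 :=
    sum_eq_zero fun n hn ↦ by
      rw [Nat.descFactorial_eq_zero_iff_lt.2 (mem_range.1 hn), Nat.cast_zero, zero_mul]
  have h := (hasSum_nat_add_iff (f := fun n ↦ (n.descFactorial k : 𝕜) * r ^ n) k).1 hshift
  rwa [hinit, add_zero] at h

lemma hasSum_descFactorial_mul_half_pow (k : ℕ) :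
    HasSum (fun n ↦ (n.descFactorial k : ℝ) * (1 / 2) ^ (n + 1)) (k.factorial : ℝ) := by
  have h := (hasSum_descFactorial_mul_geometric k (r := (1 / 2 : ℝ)) (by norm_num)).mul_left
    (1 / 2)
  have hsum :
      1 / 2 * ((k.factorial : ℝ) * (1 / 2) ^ k / (1 - 1 / 2) ^ (k + 1)) = k.factorial := by
    field_simp
    ring
  rw [hsum] at h
  exact h.congr_fun fun n ↦ by ring

theorem statement_7_general (lam : ℝ) (m r : ℕ)
    (S : ℕ → ℕ → ℝ)
    (hS : ∀ (n : ℕ) (x : ℝ), dff lam (x + r) n = ∑ k ∈ Finset.range (n + 1), S n k * ff x k) :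
    Summable (fun n : ℕ => |dff lam ((n : ℝ) + r) m * (1 / 2 : ℝ) ^ (n + 1)|) ∧
    ∑' n : ℕ, dff lam ((n : ℝ) + r) m * (1 / 2 : ℝ) ^ (n + 1) =
      ∑ k ∈ Finset.range (m + 1), S m k * k.factorial := by
  have expand (n : ℕ) : dff lam ((n : ℝ) + r) m * (1 / 2 : ℝ) ^ (n + 1) =
      ∑ k ∈ range (m + 1), S m k * ((n.descFactorial k : ℝ) * (1 / 2) ^ (n + 1)) := by
    simp only [hS, sum_mul, ff_natCast_s7, mul_assoc]
  have key : HasSum (fun n : ℕ => dff lam ((n : ℝ) + r) m * (1 / 2 : ℝ) ^ (n + 1))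
      (∑ k ∈ range (m + 1), S m k * k.factorial) :=
    (hasSum_sum fun k _ ↦
      (hasSum_descFactorial_mul_half_pow k).mul_left (S m k)).congr_fun expand
  exact ⟨summable_abs_iff.2 key.summable, key.tsum_eq⟩

/-- the series `∑_{n=0}^∞ (n+r)_{m,λ} (1/2)^{n+1}` converges absolutely and its
sum equals the degenerate `r`-Fubini number
`F^{(r)}_{m,λ} = F^{(r)}_{m,λ}(1) = ∑_{k=0}^m {m+r brace k+r}_{r,λ} k!`, where `S n k`
denotes the degenerate `r`-Stirling number of the second kind `{n+r brace k+r}_{r,λ}`,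
characterized by `(x+r)_{n,λ} = ∑_{k=0}^n S n k (x)_k`. -/
theorem statement_7 (lam : ℝ) (hlam : lam ≠ 0) (m r : ℕ)
    (S : ℕ → ℕ → ℝ)
    (hS : ∀ (n : ℕ) (x : ℝ), dff lam (x + r) n = ∑ k ∈ Finset.range (n + 1), S n k * ff x k) :
    Summable (fun n : ℕ => |dff lam ((n : ℝ) + r) m * (1 / 2 : ℝ) ^ (n + 1)|) ∧
    ∑' n : ℕ, dff lam ((n : ℝ) + r) m * (1 / 2 : ℝ) ^ (n + 1) =
      ∑ k ∈ Finset.range (m + 1), S m k * k.factorial :=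
  statement_7_general lam m r S hS
end
end
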